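/- arXiv:1801.08800 — 3 statements merged into one kernel-verified Lean document; each statement's English description precedes it below -/
import Mathlib

section
/- The parallel sum of two Hermitian positive semi-definite matrices is Hermitian positive semi-definite. That is, if A and B are Hermitian positive semi-definite complex n×n matrices, then B(A+B)†A (with † the Moore–Penrose pseudoinverse) is Hermitian positive semi-definite. -/
open Matrix
open scoped ComplexOrder

/-!
`P = (A + B) X` is the orthogonal projection onto the range of `A + B`, and `A ≤ A + B` forces the
range of `A` into it, so `A P = P A = A`. Hence `Y = X A` satisfies `(A + B) Y = A = Yᴴ (A + B)`,
and these two relations alone give `B Y = (1 - Y)ᴴ A (1 - Y) + Yᴴ B Y`, a sum of congruences of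
positive semidefinite matrices.
-/

theorem mul_eq_star_sub_mul_mul_add_star_mul_mul {R : Type*} [Ring R] [StarRing R] {a b y : R}
    (hy : (a + b) * y = a) (hy' : star y * (a + b) = a) :
    b * y = star (1 - y) * a * (1 - y) + star y * b * y := by
  have hya : star y * a = a * y := by rw [← hy, ← mul_assoc, hy', hy]
  calc b * y = (a + b) * y - a * y := by noncomm_ring
    _ = a - star y * a := by rw [hy, hya]
    _ = a - star y * a - a * y + star y * (a + b) * y := by rw [hy', sub_add_cancel]
    _ = star (1 - y) * a * (1 - y) + star y * b * y := by rw [star_sub, star_one]; noncomm_ring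

namespace Matrix.PosSemidef

open scoped MatrixOrder

variable {m 𝕜 : Type*} [Fintype m] [RCLike 𝕜] {A B M : Matrix m m 𝕜}

theorem mul_eq_zero_of_conjTranspose_mul_mul_eq_zero (hA : A.PosSemidef) (h : Mᴴ * A * M = 0) :
    A * M = 0 := by
  classical
  obtain ⟨C, rfl⟩ := CStarAlgebra.nonneg_iff_eq_star_mul_self.mp hA.nonneg
  rw [star_eq_conjTranspose] at h ⊢
  have hCM : C * M = 0 := by
    rw [← conjTranspose_mul_self_eq_zero, conjTranspose_mul, ← h]
    noncomm_ring
  rw [mul_assoc, hCM, mul_zero]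

theorem mul_eq_zero_of_add_mul_eq_zero (hA : A.PosSemidef) (hB : B.PosSemidef)
    (h : (A + B) * M = 0) : A * M = 0 := by
  refine hA.mul_eq_zero_of_conjTranspose_mul_mul_eq_zero ?_
  have hsum : Mᴴ * A * M + Mᴴ * B * M = 0 := by
    rw [mul_assoc, mul_assoc, ← mul_add, ← add_mul, h, mul_zero]
  exact ((add_eq_zero_iff_of_nonneg (hA.conjTranspose_mul_mul_same M).nonneg
    (hB.conjTranspose_mul_mul_same M).nonneg).mp hsum).1

end Matrix.PosSemidef

theorem parallel_sum_posSemidef_general {n : ℕ} (A B X : Matrix (Fin n) (Fin n) ℂ)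
    (hA : A.PosSemidef) (hB : B.PosSemidef)
    (h1 : (A + B) * X * (A + B) = A + B)
    (h3 : ((A + B) * X)ᴴ = (A + B) * X) :
    (B * X * A).PosSemidef := by
  have hS : (A + B)ᴴ = A + B := (hA.1.add hB.1).eq
  have hSP : (A + B) * ((A + B) * X) = A + B := by
    simpa only [conjTranspose_mul, hS, h3] using congrArg conjTranspose h1
  have hAP : A * ((A + B) * X) = A := by
    have := hA.mul_eq_zero_of_add_mul_eq_zero hB (M := 1 - (A + B) * X)
      (by rw [mul_sub, mul_one, hSP, sub_self])
    rwa [mul_sub, mul_one, sub_eq_zero, eq_comm] at this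
  have hPA : (A + B) * (X * A) = A := by
    simpa only [conjTranspose_mul, h3, hA.1.eq, mul_assoc] using congrArg conjTranspose hAP
  have hAP' : star (X * A) * (A + B) = A := by
    rw [star_eq_conjTranspose, conjTranspose_mul, hA.1.eq, mul_assoc, ← hS, ← conjTranspose_mul,
      h3, hAP]
  rw [mul_assoc, mul_eq_star_sub_mul_mul_add_star_mul_mul hPA hAP', star_eq_conjTranspose,
    star_eq_conjTranspose]
  exact (hA.conjTranspose_mul_mul_same _).add (hB.conjTranspose_mul_mul_same _)

/-- The parallel sum `B (A+B)† A` of two Hermitian positive semi-definite matrices is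
Hermitian positive semi-definite. The Moore–Penrose pseudoinverse `(A+B)†` is characterized
by the four Penrose conditions, which we take as hypotheses on `X`. -/
theorem parallel_sum_posSemidef {n : ℕ} (A B X : Matrix (Fin n) (Fin n) ℂ)
    (hA : A.PosSemidef) (hB : B.PosSemidef)
    (h1 : (A + B) * X * (A + B) = A + B)
    (h2 : X * (A + B) * X = X)
    (h3 : ((A + B) * X)ᴴ = (A + B) * X)
    (h4 : (X * (A + B))ᴴ = X * (A + B)) :
    (B * X * A).PosSemidef :=
  parallel_sum_posSemidef_general A B X hA hB h1 h3
end

section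
/- Abstract condition number bound (fictitious space / BDDC lemma): let Ŝ be a Hermitian positive definite operator on a finite-dimensional complex Hilbert space Ŵ, S̃ Hermitian positive definite on W̃, and E : W̃ → Ŵ a surjective linear map with a right inverse R : Ŵ → W̃ (E R = I) such that (i) (S̃ R û, R û) ≤ (Ŝ û, û) for all û ∈ Ŵ, and (ii) (Ŝ E w̃, E w̃) ≤ C (S̃ w̃, w̃) for all w̃ ∈ W̃. Then all eigenvalues λ of M⁻¹Ŝ with M⁻¹ = E S̃⁻¹ E^H satisfy 1 ≤ λ ≤ C, so the condition number κ(M⁻¹Ŝ) ≤ C. -/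
/-!
Let `M⁻¹ Ŝ u = λ u` with `u ≠ 0` and put `w = S̃⁻¹ Eᴴ Ŝ u`, so that `E w = λ u` and
`S̃ w = Eᴴ Ŝ u`. Then `(S̃ w, w) = (Ŝ u, E w) = λ (Ŝ u, u)`, so `λ` is the real number
`(S̃ w, w) / (Ŝ u, u)`. Since `(S̃ w, R u) = (Ŝ u, E R u) = (Ŝ u, u)`, positivity of `S̃` on
`w - R u` together with (i) gives `(Ŝ u, u) ≤ (S̃ w, w)`, i.e. `1 ≤ λ`; and (ii) applied to `w`
reads `λ² (Ŝ u, u) ≤ C λ (Ŝ u, u)`, i.e. `λ ≤ C`.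
-/

open RCLike
open scoped InnerProductSpace

section

variable {𝕜 V W : Type*} [RCLike 𝕜]
  [NormedAddCommGroup V] [InnerProductSpace 𝕜 V] [NormedAddCommGroup W] [InnerProductSpace 𝕜 W]

theorem LinearMap.IsSymmetric.isPositive_of_re_inner_pos {T : V →ₗ[𝕜] V} (hT : T.IsSymmetric)
    (hpos : ∀ x, x ≠ 0 → 0 < re ⟪T x, x⟫_𝕜) : T.IsPositive := by
  refine ⟨hT, fun x => ?_⟩
  rcases eq_or_ne x 0 with rfl | hx
  · simp
  · exact (hpos x hx).le

theorem LinearMap.IsPositive.two_mul_re_inner_le {T : V →ₗ[𝕜] V} (hT : T.IsPositive) (x y : V) :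
    2 * re ⟪T x, y⟫_𝕜 ≤ re ⟪T x, x⟫_𝕜 + re ⟪T y, y⟫_𝕜 := by
  have hsymm : re ⟪T y, x⟫_𝕜 = re ⟪T x, y⟫_𝕜 := by
    rw [hT.isSymmetric y x, inner_re_symm]
  have hnonneg := hT.re_inner_nonneg_left (x - y)
  simp only [map_sub, inner_sub_left, inner_sub_right] at hnonneg
  linarith

theorem re_inner_map_ofReal_smul_self (T : V →ₗ[𝕜] V) (c : ℝ) (x : V) :
    re ⟪T ((c : 𝕜) • x), (c : 𝕜) • x⟫_𝕜 = c ^ 2 * re ⟪T x, x⟫_𝕜 := by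
  rw [map_smul, inner_smul_real_left, inner_smul_real_right]
  simp only [smul_re]
  ring

section Eigenvector

variable [FiniteDimensional 𝕜 V] [FiniteDimensional 𝕜 W]
  {Sh : V →ₗ[𝕜] V} {St : W →ₗ[𝕜] W} {E : W →ₗ[𝕜] V} {u : V} {w : W}

theorem inner_apply_self_eq_mul_of_adjoint (hSt : St w = LinearMap.adjoint E (Sh u)) {lam : 𝕜}
    (hE : E w = lam • u) : ⟪St w, w⟫_𝕜 = lam * ⟪Sh u, u⟫_𝕜 := by
  rw [hSt, LinearMap.adjoint_inner_left, hE, inner_smul_right]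

theorem eq_ofReal_div_of_adjoint (hSh : Sh.IsSymmetric) (hSt : St.IsSymmetric)
    (hu : re ⟪Sh u, u⟫_𝕜 ≠ 0) (hStw : St w = LinearMap.adjoint E (Sh u)) {lam : 𝕜}
    (hE : E w = lam • u) : lam = ((re ⟪St w, w⟫_𝕜 / re ⟪Sh u, u⟫_𝕜 : ℝ) : 𝕜) := by
  have h := inner_apply_self_eq_mul_of_adjoint hStw hE
  rw [← hSt.coe_re_inner_apply_self, ← hSh.coe_re_inner_apply_self] at h
  rw [ofReal_div, h, mul_div_cancel_right₀ _ (ofReal_ne_zero.mpr hu)]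

theorem re_inner_le_of_adjoint (hSt : St.IsPositive) (hStw : St w = LinearMap.adjoint E (Sh u))
    {R : V →ₗ[𝕜] W} (hER : E (R u) = u) (hstable : re ⟪St (R u), R u⟫_𝕜 ≤ re ⟪Sh u, u⟫_𝕜) :
    re ⟪Sh u, u⟫_𝕜 ≤ re ⟪St w, w⟫_𝕜 := by
  have hcross : ⟪St w, R u⟫_𝕜 = ⟪Sh u, u⟫_𝕜 := by
    rw [hStw, LinearMap.adjoint_inner_left, hER]
  have h := hSt.two_mul_re_inner_le w (R u)
  rw [hcross] at h
  linarith

variable {Stinv : W →ₗ[𝕜] W}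

theorem exists_ofReal_mem_Icc_of_hasEigenvalue (hSh : Sh.IsSymmetric)
    (hShpos : ∀ u, u ≠ 0 → 0 < re ⟪Sh u, u⟫_𝕜) (hSt : St.IsPositive)
    (hStinv : St ∘ₗ Stinv = LinearMap.id) {R : V →ₗ[𝕜] W} (hER : E ∘ₗ R = LinearMap.id) {C : ℝ}
    (hstable : ∀ u, re ⟪St (R u), R u⟫_𝕜 ≤ re ⟪Sh u, u⟫_𝕜)
    (hbound : ∀ w, re ⟪Sh (E w), E w⟫_𝕜 ≤ C * re ⟪St w, w⟫_𝕜) {lam : 𝕜}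
    (hlam : Module.End.HasEigenvalue (E ∘ₗ Stinv ∘ₗ LinearMap.adjoint E ∘ₗ Sh) lam) :
    ∃ μ : ℝ, lam = μ ∧ μ ∈ Set.Icc 1 C := by
  obtain ⟨u, hu⟩ := hlam.exists_hasEigenvector
  set w := Stinv (LinearMap.adjoint E (Sh u))
  have hEw : E w = lam • u := by simpa using hu.apply_eq_smul
  have hStw : St w = LinearMap.adjoint E (Sh u) := LinearMap.congr_fun hStinv _
  have hs : 0 < re ⟪Sh u, u⟫_𝕜 := hShpos u hu.2
  have hlam_eq := eq_ofReal_div_of_adjoint hSh hSt.isSymmetric hs.ne' hStw hEw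
  set μ := re ⟪St w, w⟫_𝕜 / re ⟪Sh u, u⟫_𝕜
  have hlower : 1 ≤ μ :=
    (one_le_div hs).mpr (re_inner_le_of_adjoint hSt hStw (LinearMap.congr_fun hER u) (hstable u))
  have hupper : μ * (μ * re ⟪Sh u, u⟫_𝕜) ≤ C * (μ * re ⟪Sh u, u⟫_𝕜) := by
    have h := hbound w
    rw [hEw, hlam_eq, re_inner_map_ofReal_smul_self, ← div_mul_cancel₀ (re ⟪St w, w⟫_𝕜) hs.ne'] at h
    linarith
  exact ⟨μ, hlam_eq, hlower, le_of_mul_le_mul_right hupper (by positivity)⟩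

end Eigenvector

end

theorem bddc_condition_number_bound_general
    {Wh Wt : Type*}
    [NormedAddCommGroup Wh] [InnerProductSpace ℂ Wh] [FiniteDimensional ℂ Wh]
    [NormedAddCommGroup Wt] [InnerProductSpace ℂ Wt] [FiniteDimensional ℂ Wt]
    (Sh : Wh →ₗ[ℂ] Wh) (St : Wt →ₗ[ℂ] Wt) (Stinv : Wt →ₗ[ℂ] Wt)
    (hShsym : ∀ u v : Wh, (inner ℂ (Sh u) v : ℂ) = inner ℂ u (Sh v))
    (hShpos : ∀ u : Wh, u ≠ 0 → 0 < (inner ℂ (Sh u) u : ℂ).re)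
    (hStsym : ∀ u v : Wt, (inner ℂ (St u) v : ℂ) = inner ℂ u (St v))
    (hStpos : ∀ u : Wt, u ≠ 0 → 0 < (inner ℂ (St u) u : ℂ).re)
    (hStinv₁ : St ∘ₗ Stinv = LinearMap.id)
    (E : Wt →ₗ[ℂ] Wh) (R : Wh →ₗ[ℂ] Wt) (hER : E ∘ₗ R = LinearMap.id)
    (C : ℝ)
    (hstable : ∀ u : Wh, (inner ℂ (St (R u)) (R u) : ℂ).re ≤ (inner ℂ (Sh u) u : ℂ).re)
    (hbound : ∀ w : Wt, (inner ℂ (Sh (E w)) (E w) : ℂ).re ≤ C * (inner ℂ (St w) w : ℂ).re) :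
    ∀ lam : ℂ,
      Module.End.HasEigenvalue
        ((E ∘ₗ Stinv ∘ₗ (LinearMap.adjoint E) ∘ₗ Sh : Wh →ₗ[ℂ] Wh) : Module.End ℂ Wh) lam →
      lam.im = 0 ∧ 1 ≤ lam.re ∧ lam.re ≤ C := by
  intro lam hlam
  obtain ⟨μ, rfl, hμ₁, hμ₂⟩ := exists_ofReal_mem_Icc_of_hasEigenvalue hShsym hShpos
    (LinearMap.IsSymmetric.isPositive_of_re_inner_pos hStsym hStpos) hStinv₁ hER hstable hbound
    hlam
  exact ⟨Complex.ofReal_im μ, hμ₁, hμ₂⟩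

/-- Abstract BDDC condition number bound: if `E R = I`, `(St R û, R û) ≤ (Sh û, û)` and
`(Sh E w̃, E w̃) ≤ C (St w̃, w̃)`, then every eigenvalue `λ` of `M⁻¹ Sh = E St⁻¹ Eᴴ Sh`
satisfies `1 ≤ λ ≤ C` (in particular `λ` is real), so `κ(M⁻¹Sh) ≤ C`. -/
theorem bddc_condition_number_bound
    {Wh Wt : Type*}
    [NormedAddCommGroup Wh] [InnerProductSpace ℂ Wh] [FiniteDimensional ℂ Wh]
    [NormedAddCommGroup Wt] [InnerProductSpace ℂ Wt] [FiniteDimensional ℂ Wt]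
    (Sh : Wh →ₗ[ℂ] Wh) (St : Wt →ₗ[ℂ] Wt) (Stinv : Wt →ₗ[ℂ] Wt)
    (hShsym : ∀ u v : Wh, (inner ℂ (Sh u) v : ℂ) = inner ℂ u (Sh v))
    (hShpos : ∀ u : Wh, u ≠ 0 → 0 < (inner ℂ (Sh u) u : ℂ).re)
    (hStsym : ∀ u v : Wt, (inner ℂ (St u) v : ℂ) = inner ℂ u (St v))
    (hStpos : ∀ u : Wt, u ≠ 0 → 0 < (inner ℂ (St u) u : ℂ).re)
    (hStinv₁ : St ∘ₗ Stinv = LinearMap.id) (hStinv₂ : Stinv ∘ₗ St = LinearMap.id)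
    (E : Wt →ₗ[ℂ] Wh) (R : Wh →ₗ[ℂ] Wt) (hER : E ∘ₗ R = LinearMap.id)
    (C : ℝ) (hC : 1 ≤ C)
    (hstable : ∀ u : Wh, (inner ℂ (St (R u)) (R u) : ℂ).re ≤ (inner ℂ (Sh u) u : ℂ).re)
    (hbound : ∀ w : Wt, (inner ℂ (Sh (E w)) (E w) : ℂ).re ≤ C * (inner ℂ (St w) w : ℂ).re) :
    ∀ lam : ℂ,
      Module.End.HasEigenvalue
        ((E ∘ₗ Stinv ∘ₗ (LinearMap.adjoint E) ∘ₗ Sh : Wh →ₗ[ℂ] Wh) : Module.End ℂ Wh) lam →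
      lam.im = 0 ∧ 1 ≤ lam.re ∧ lam.re ≤ C :=
  bddc_condition_number_bound_general Sh St Stinv hShsym hShpos hStsym hStpos hStinv₁ E R hER C
    hstable hbound
end

section
/- Jump operator bound: let a_r (r = 1,…,N) be Hermitian positive semi-definite sesquilinear forms and suppose for each r an element w^(r) decomposes as a sum over at most C_F interface components, with each pair of components across an interface satisfying the local estimate |w_D^{k,r}|²_{a_r} + |w̃_D^{k,j}|²_{a_j} ≤ Θ |w̄_k^{(r)}|²_{a_r} where |w̄_k^{(r)}|²_{a_r} ≤ |w^(r)|²_{a_r} (energy-minimal extension bound). Then Σ_r |Σ_{k} (w_D^{k,r} − w̃_D^{k,r})|²_{a_r} ≤ 2 C_F² Θ Σ_r |w^(r)|²_{a_r}. -/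
/-! Write `q v = Re a(v, v)`. For a Hermitian positive semi-definite form, `Re a(v, w)` is
symmetric and `0 ≤ q (v ∓ w)` gives `2 |Re a(v, w)| ≤ q v + q w`. Expanding `q (∑ k ∈ s, f k)`
as a double sum and bounding each cross term this way yields `q (∑ f) ≤ #s ∑ q (f k)`, and
`q (v - w) ≤ 2 (q v + q w)`. So subdomain `r` contributes at most
`2 C_F ∑_k (q(w_D^{k,r}) + q(w̃_D^{k,r}))`; after summing over `r` the pairing symmetry trades
the `w̃_D` energies for the cross energies `b r k`, and the local eigenvalue estimate followed by
the energy-minimal extension bound supply the factor `Θ C_F`. -/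

open Finset

namespace LinearMap

variable {V : Type*} [AddCommGroup V] [Module ℂ V] (A : V →ₗ⋆[ℂ] V →ₗ[ℂ] ℂ)

section Hermitian

variable {A} (hHerm : ∀ v w : V, A v w = starRingEnd ℂ (A w v))
include hHerm

theorem re_apply_comm (v w : V) : (A w v).re = (A v w).re := by
  rw [hHerm v w, Complex.conj_re]

theorem re_apply_add_self (v w : V) :
    (A (v + w) (v + w)).re = (A v v).re + 2 * (A v w).re + (A w w).re := by
  simp only [map_add, add_apply, Complex.add_re, re_apply_comm hHerm v w]
  ring

theorem re_apply_sub_self (v w : V) :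
    (A (v - w) (v - w)).re = (A v v).re - 2 * (A v w).re + (A w w).re := by
  simp only [map_sub, sub_apply, Complex.sub_re, re_apply_comm hHerm v w]
  ring

variable (hPos : ∀ v : V, 0 ≤ (A v v).re)
include hPos

theorem two_mul_re_apply_le (v w : V) : 2 * (A v w).re ≤ (A v v).re + (A w w).re := by
  linarith [hPos (v - w), re_apply_sub_self hHerm v w]

theorem re_apply_sub_self_le (v w : V) :
    (A (v - w) (v - w)).re ≤ 2 * ((A v v).re + (A w w).re) := by
  linarith [hPos (v + w), re_apply_add_self hHerm v w, re_apply_sub_self hHerm v w]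

theorem re_apply_sum_self_le {ι : Type*} (s : Finset ι) (f : ι → V) :
    (A (∑ k ∈ s, f k) (∑ k ∈ s, f k)).re ≤ #s * ∑ k ∈ s, (A (f k) (f k)).re := by
  have hdiag : ∑ i ∈ s, ∑ j ∈ s, ((A (f i) (f i)).re + (A (f j) (f j)).re)
      = 2 * (#s * ∑ k ∈ s, (A (f k) (f k)).re) := by
    simp only [sum_add_distrib, sum_const, nsmul_eq_mul, ← mul_sum]
    ring
  calc (A (∑ k ∈ s, f k) (∑ k ∈ s, f k)).re
      = ∑ i ∈ s, ∑ j ∈ s, (A (f i) (f j)).re := by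
        simp only [map_sum, sum_apply, Complex.re_sum]
        exact sum_comm
    _ ≤ ∑ i ∈ s, ∑ j ∈ s, ((A (f i) (f i)).re + (A (f j) (f j)).re) / 2 :=
        sum_le_sum fun i _ => sum_le_sum fun j _ => by
          linarith [two_mul_re_apply_le hHerm hPos (f i) (f j)]
    _ = #s * ∑ k ∈ s, (A (f k) (f k)).re := by
        simp only [← sum_div, hdiag]
        ring

theorem re_apply_sum_sub_self_le {ι : Type*} (s : Finset ι) (x y : ι → V) {C : ℕ}
    (hs : #s ≤ C) :
    (A (∑ k ∈ s, (x k - y k)) (∑ k ∈ s, (x k - y k))).re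
      ≤ 2 * C * ∑ k ∈ s, ((A (x k) (x k)).re + (A (y k) (y k)).re) := by
  have hcard : (#s : ℝ) ≤ C := by exact_mod_cast hs
  calc (A (∑ k ∈ s, (x k - y k)) (∑ k ∈ s, (x k - y k))).re
      ≤ #s * ∑ k ∈ s, (A (x k - y k) (x k - y k)).re := re_apply_sum_self_le hHerm hPos s _
    _ ≤ C * ∑ k ∈ s, 2 * ((A (x k) (x k)).re + (A (y k) (y k)).re) := by
        gcongr with k
        · exact sum_nonneg fun k _ => hPos _
        · exact re_apply_sub_self_le hHerm hPos _ _
    _ = 2 * C * ∑ k ∈ s, ((A (x k) (x k)).re + (A (y k) (y k)).re) := by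
        rw [← mul_sum]
        ring

end Hermitian

end LinearMap

theorem jump_operator_bound_general {V : Type*} [AddCommGroup V] [Module ℂ V]
    (N K : ℕ) (a : Fin N → (V →ₗ⋆[ℂ] V →ₗ[ℂ] ℂ))
    (hHerm : ∀ r, ∀ v w : V, a r v w = starRingEnd ℂ (a r w v))
    (hPos : ∀ r, ∀ v : V, 0 ≤ (a r v v).re)
    (M : Fin N → Finset (Fin K)) (CF : ℕ) (hCF : ∀ r, (M r).card ≤ CF)
    (Θ : ℝ) (hΘ : 1 ≤ Θ)
    (wD wtD wbar : Fin N → Fin K → V) (w : Fin N → V)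
    (b : Fin N → Fin K → ℝ)
    -- pairing symmetry: the cross energies `b r k` are a relabeling of the energies
    -- `|w̃_D^{k,r}|²_{a_r}` across the interfaces
    (hsym : ∑ r, ∑ k ∈ M r, (a r (wtD r k) (wtD r k)).re = ∑ r, ∑ k ∈ M r, b r k)
    -- eigenvalue-based local estimate (3.34)
    (heig : ∀ r, ∀ k ∈ M r,
      (a r (wD r k) (wD r k)).re + b r k ≤ Θ * (a r (wbar r k) (wbar r k)).re)
    -- energy-minimal extension bound (3.21)
    (hmin : ∀ r, ∑ k ∈ M r, (a r (wbar r k) (wbar r k)).re ≤ (CF : ℝ) * (a r (w r) (w r)).re) :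
    ∑ r, (a r (∑ k ∈ M r, (wD r k - wtD r k)) (∑ k ∈ M r, (wD r k - wtD r k))).re ≤
      2 * (CF : ℝ) ^ 2 * Θ * ∑ r, (a r (w r) (w r)).re := by
  have hpaired : ∑ r, ∑ k ∈ M r, ((a r (wD r k) (wD r k)).re + (a r (wtD r k) (wtD r k)).re)
      = ∑ r, ∑ k ∈ M r, ((a r (wD r k) (wD r k)).re + b r k) := by
    simp only [sum_add_distrib, hsym]
  calc ∑ r, (a r (∑ k ∈ M r, (wD r k - wtD r k)) (∑ k ∈ M r, (wD r k - wtD r k))).re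
      ≤ ∑ r, 2 * CF * ∑ k ∈ M r, ((a r (wD r k) (wD r k)).re + (a r (wtD r k) (wtD r k)).re) :=
        sum_le_sum fun r _ =>
          (a r).re_apply_sum_sub_self_le (hHerm r) (hPos r) (M r) (wD r) (wtD r) (hCF r)
    _ = 2 * CF * ∑ r, ∑ k ∈ M r, ((a r (wD r k) (wD r k)).re + b r k) := by
        rw [← mul_sum, hpaired]
    _ ≤ 2 * CF * ∑ r, Θ * ∑ k ∈ M r, (a r (wbar r k) (wbar r k)).re := by
        gcongr with r
        rw [mul_sum]
        exact sum_le_sum (heig r)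
    _ ≤ 2 * CF * ∑ r, Θ * (CF * (a r (w r) (w r)).re) := by
        gcongr with r
        exact hmin r
    _ = 2 * (CF : ℝ) ^ 2 * Θ * ∑ r, (a r (w r) (w r)).re := by
        simp only [mul_sum]
        exact sum_congr rfl fun r _ => by ring

/-- Jump operator bound for the adaptive BDDC algorithm. Each subdomain `r` has at most `C_F`
interfaces `k ∈ M r`; `b r k` denotes the cross energy `|w̃_D^{k,j}|²_{a_j}` of the interface
component measured in the neighboring subdomain, with the pairing symmetry
`Σ_{r,k} |w̃_D^{k,r}|²_{a_r} = Σ_{r,k} b r k`. Under the eigenvalue-based local estimate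
`|w_D^{k,r}|²_{a_r} + |w̃_D^{k,j}|²_{a_j} ≤ Θ |wbar_k^{(r)}|²_{a_r}` and the energy-minimal
extension bound `Σ_{k∈M_r} |wbar_k^{(r)}|²_{a_r} ≤ C_F |w^{(r)}|²_{a_r}`, one has
`Σ_r |Σ_k (w_D^{k,r} − w̃_D^{k,r})|²_{a_r} ≤ 2 C_F² Θ Σ_r |w^{(r)}|²_{a_r}`. -/
theorem jump_operator_bound {V : Type*} [AddCommGroup V] [Module ℂ V]
    (N K : ℕ) (a : Fin N → (V →ₗ⋆[ℂ] V →ₗ[ℂ] ℂ))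
    (hHerm : ∀ r, ∀ v w : V, a r v w = starRingEnd ℂ (a r w v))
    (hPos : ∀ r, ∀ v : V, 0 ≤ (a r v v).re)
    (M : Fin N → Finset (Fin K)) (CF : ℕ) (hCF : ∀ r, (M r).card ≤ CF)
    (Θ : ℝ) (hΘ : 1 ≤ Θ)
    (wD wtD wbar : Fin N → Fin K → V) (w : Fin N → V)
    (b : Fin N → Fin K → ℝ) (hb : ∀ r k, 0 ≤ b r k)
    -- pairing symmetry: the cross energies `b r k` are a relabeling of the energies
    -- `|w̃_D^{k,r}|²_{a_r}` across the interfaces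
    (hsym : ∑ r, ∑ k ∈ M r, (a r (wtD r k) (wtD r k)).re = ∑ r, ∑ k ∈ M r, b r k)
    -- eigenvalue-based local estimate (3.34)
    (heig : ∀ r, ∀ k ∈ M r,
      (a r (wD r k) (wD r k)).re + b r k ≤ Θ * (a r (wbar r k) (wbar r k)).re)
    -- energy-minimal extension bound (3.21)
    (hmin : ∀ r, ∑ k ∈ M r, (a r (wbar r k) (wbar r k)).re ≤ (CF : ℝ) * (a r (w r) (w r)).re) :
    ∑ r, (a r (∑ k ∈ M r, (wD r k - wtD r k)) (∑ k ∈ M r, (wD r k - wtD r k))).re ≤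
      2 * (CF : ℝ) ^ 2 * Θ * ∑ r, (a r (w r) (w r)).re :=
  jump_operator_bound_general N K a hHerm hPos M CF hCF Θ hΘ wD wtD wbar w b hsym heig hmin
end
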